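/- arXiv:1112.1993 — 2 statements merged into one kernel-verified Lean document; each statement's English description precedes it below -/
import Mathlib

section
/- Let X be a nonempty finite subset of ℝ^n and σ > 0. For every y ∈ ℝ^n with the kernel density estimator f and mean shift map m as defined, one has m(y) − y = σ² · ∇f(y) / f(y); equivalently, f(y) · (m(y) − y) = σ² · ∇f(y). In particular the mean shift vector m(y) − y is proportional to the normalized gradient ∇f(y)/f(y). -/
open scoped BigOperators

/-- Gaussian kernel: density of the multivariate normal distribution on `ℝ^n`
with mean `x` and covariance matrix `σ² I`. -/
noncomputable def gaussKernel (n : ℕ) (σ : ℝ) (x y : EuclideanSpace ℝ (Fin n)) : ℝ :=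
  (2 * Real.pi * σ ^ 2) ^ (-(n : ℝ) / 2) * Real.exp (-‖y - x‖ ^ 2 / (2 * σ ^ 2))

/-- Kernel density estimator `f(y) = |X|⁻¹ Σ_{x ∈ X} ψ_{x,σ}(y)`. -/
noncomputable def kde (n : ℕ) (σ : ℝ) (X : Finset (EuclideanSpace ℝ (Fin n)))
    (y : EuclideanSpace ℝ (Fin n)) : ℝ :=
  (X.card : ℝ)⁻¹ * ∑ x ∈ X, gaussKernel n σ x y

/-- Mean shift map `m(y) = (Σ_{x∈X} ψ_{x,σ}(y) x) / (Σ_{x∈X} ψ_{x,σ}(y))`. -/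
noncomputable def meanShift (n : ℕ) (σ : ℝ) (X : Finset (EuclideanSpace ℝ (Fin n)))
    (y : EuclideanSpace ℝ (Fin n)) : EuclideanSpace ℝ (Fin n) :=
  (∑ x ∈ X, gaussKernel n σ x y)⁻¹ • ∑ x ∈ X, gaussKernel n σ x y • x

/-!
Each Gaussian satisfies `∇ψ_{x,σ}(y) = σ⁻² ψ_{x,σ}(y) (x - y)`, so
`σ² ∇f(y) = |X|⁻¹ Σ ψ_{x,σ}(y) (x - y) = f(y) m(y) - f(y) y`; dividing by `f(y) > 0` gives the
normalized form.
-/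

open Finset Real

section Gradient

variable {F : Type*} [NormedAddCommGroup F] [InnerProductSpace ℝ F] [CompleteSpace F]
  {f : F → ℝ} {f' x : F}

theorem hasGradientAt_iff_hasFDerivAt_innerSL :
    HasGradientAt f f' x ↔ HasFDerivAt f (innerSL ℝ f') x :=
  Iff.rfl

theorem HasGradientAt.const_mul (c : ℝ) (h : HasGradientAt f f' x) :
    HasGradientAt (fun y => c * f y) (c • f') x := by
  rw [hasGradientAt_iff_hasFDerivAt_innerSL, map_smul]
  exact HasFDerivAt.const_mul h c

theorem HasGradientAt.fun_sum {ι : Type*} {s : Finset ι} {f : ι → F → ℝ} {f' : ι → F}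
    (h : ∀ i ∈ s, HasGradientAt (f i) (f' i) x) :
    HasGradientAt (fun y => ∑ i ∈ s, f i y) (∑ i ∈ s, f' i) x := by
  rw [hasGradientAt_iff_hasFDerivAt_innerSL, map_sum]
  exact HasFDerivAt.fun_sum h

end Gradient

variable {n : ℕ} {σ : ℝ}

theorem gaussKernel_pos (hσ : σ ≠ 0) (x y : EuclideanSpace ℝ (Fin n)) :
    0 < gaussKernel n σ x y := by
  unfold gaussKernel
  positivity

theorem hasGradientAt_gaussKernel (x y : EuclideanSpace ℝ (Fin n)) :
    HasGradientAt (gaussKernel n σ x) (((σ ^ 2)⁻¹ * gaussKernel n σ x y) • (x - y)) y := by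
  have h := (((hasFDerivAt_id y).sub_const x).norm_sq.const_mul
    (-(2 * σ ^ 2)⁻¹)).exp.const_mul ((2 * π * σ ^ 2) ^ (-(n : ℝ) / 2))
  have hψ : gaussKernel n σ x =
      fun z => (2 * π * σ ^ 2) ^ (-(n : ℝ) / 2) * exp (-(2 * σ ^ 2)⁻¹ * ‖id z - x‖ ^ 2) := by
    funext z
    simp only [gaussKernel, id]
    ring_nf
  rw [hasGradientAt_iff_hasFDerivAt_innerSL, hψ]
  refine h.congr_fderiv ?_
  ext v
  simp only [id_eq, neg_mul, map_sub, ContinuousLinearMap.comp_id, neg_smul, smul_neg, neg_apply,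
    smul_apply, sub_apply, coe_innerSL_apply, nsmul_eq_mul, smul_eq_mul, map_smul]
  ring_nf

variable {X : Finset (EuclideanSpace ℝ (Fin n))}

theorem hasGradientAt_kde (y : EuclideanSpace ℝ (Fin n)) :
    HasGradientAt (kde n σ X)
      ((#X : ℝ)⁻¹ • ∑ x ∈ X, ((σ ^ 2)⁻¹ * gaussKernel n σ x y) • (x - y)) y :=
  (HasGradientAt.fun_sum fun x _ => hasGradientAt_gaussKernel x y).const_mul _

theorem sq_smul_gradient_kde (hσ : σ ≠ 0) (y : EuclideanSpace ℝ (Fin n)) :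
    σ ^ 2 • gradient (kde n σ X) y = (#X : ℝ)⁻¹ • ∑ x ∈ X, gaussKernel n σ x y • (x - y) := by
  rw [(hasGradientAt_kde y).gradient, smul_comm, smul_sum]
  congr 1
  refine sum_congr rfl fun x _ => ?_
  rw [smul_smul, ← mul_assoc, mul_inv_cancel₀ (pow_ne_zero 2 hσ), one_mul]

theorem kde_pos (hX : X.Nonempty) (hσ : σ ≠ 0) (y : EuclideanSpace ℝ (Fin n)) :
    0 < kde n σ X y :=
  mul_pos (by simpa using hX) (sum_pos (fun x _ => gaussKernel_pos hσ x y) hX)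

theorem kde_smul_meanShift (hX : X.Nonempty) (hσ : σ ≠ 0) (y : EuclideanSpace ℝ (Fin n)) :
    kde n σ X y • meanShift n σ X y = (#X : ℝ)⁻¹ • ∑ x ∈ X, gaussKernel n σ x y • x := by
  rw [kde, meanShift, mul_smul, smul_inv_smul₀ (sum_pos (fun x _ => gaussKernel_pos hσ x y) hX).ne']

theorem kde_smul_meanShift_sub (hX : X.Nonempty) (hσ : σ ≠ 0) (y : EuclideanSpace ℝ (Fin n)) :
    kde n σ X y • (meanShift n σ X y - y) = σ ^ 2 • gradient (kde n σ X) y := by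
  rw [smul_sub, kde_smul_meanShift hX hσ, sq_smul_gradient_kde hσ, kde, mul_smul, sum_smul,
    ← smul_sub, ← sum_sub_distrib]
  simp_rw [smul_sub]

/-- The mean shift vector `m(y) − y` equals `σ² ∇f(y) / f(y)`; equivalently,
`f(y) • (m(y) − y) = σ² • ∇f(y)`. -/
theorem meanShift_eq_normalized_gradient (n : ℕ) (X : Finset (EuclideanSpace ℝ (Fin n)))
    (hX : X.Nonempty) (σ : ℝ) (hσ : 0 < σ) (y : EuclideanSpace ℝ (Fin n)) :
    meanShift n σ X y - y = (σ ^ 2 / kde n σ X y) • gradient (kde n σ X) y ∧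
    kde n σ X y • (meanShift n σ X y - y) = σ ^ 2 • gradient (kde n σ X) y := by
  have key := kde_smul_meanShift_sub hX hσ.ne' y
  refine ⟨?_, key⟩
  rw [div_eq_inv_mul, mul_smul, ← key, inv_smul_smul₀ (kde_pos hX hσ.ne' y).ne']
end

section
/- Let X be a nonempty finite subset of ℝ^n and σ > 0, with kernel density estimator f and mean shift map m as defined. Then one mean shift step never decreases the estimated density: f(m(y)) ≥ f(y) for every y ∈ ℝ^n. -/
open scoped BigOperators

/-!
Since `exp` lies above its tangent lines,
`ψ_{x,σ}(m) - ψ_{x,σ}(y) ≥ ψ_{x,σ}(y) (‖y - x‖² - ‖m - x‖²) / (2σ²)` for every `m`.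
The mean shift `m(y)` is the centre of mass of `X` with weights `ψ_{x,σ}(y)`, so by the parallel
axis theorem these right-hand sides sum to `(∑ₓ ψ_{x,σ}(y)) ‖y - m(y)‖² / (2σ²) ≥ 0`.
-/

open Finset

lemma Real.exp_mul_sub_le_exp_sub_exp (a b : ℝ) : exp b * (a - b) ≤ exp a - exp b := by
  have h := mul_le_mul_of_nonneg_left (add_one_le_exp (a - b)) (exp_nonneg b)
  rw [← exp_add, add_sub_cancel] at h
  linarith

namespace Finset

variable {ι : Type*} (t : Finset ι) {w : ι → ℝ}

lemma sum_smul_centerMass_of_nonneg {E : Type*} [AddCommGroup E] [Module ℝ E] (z : ι → E)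
    (hw : ∀ i ∈ t, 0 ≤ w i) : (∑ i ∈ t, w i) • t.centerMass w z = ∑ i ∈ t, w i • z i := by
  by_cases hS : ∑ i ∈ t, w i = 0
  · have hw₀ := (sum_eq_zero_iff_of_nonneg hw).1 hS
    rw [hS, zero_smul, sum_eq_zero fun i hi => by rw [hw₀ i hi, zero_smul]]
  · exact smul_inv_smul₀ hS _

theorem sum_mul_norm_sub_sq_eq_of_nonneg {E : Type*} [NormedAddCommGroup E]
    [InnerProductSpace ℝ E] (z : ι → E) (hw : ∀ i ∈ t, 0 ≤ w i) (y : E) :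
    ∑ i ∈ t, w i * ‖y - z i‖ ^ 2 = ∑ i ∈ t, w i * ‖t.centerMass w z - z i‖ ^ 2
      + (∑ i ∈ t, w i) * ‖y - t.centerMass w z‖ ^ 2 := by
  set m := t.centerMass w z
  have hcross : ∑ i ∈ t, w i * inner ℝ (y - m) (m - z i) = 0 := by
    simp_rw [← real_inner_smul_right, ← inner_sum, smul_sub, sum_sub_distrib, ← sum_smul]
    rw [sum_smul_centerMass_of_nonneg t z hw, sub_self, inner_zero_right]
  calc ∑ i ∈ t, w i * ‖y - z i‖ ^ 2
      = ∑ i ∈ t, (w i * ‖m - z i‖ ^ 2 + 2 * (w i * inner ℝ (y - m) (m - z i))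
          + w i * ‖y - m‖ ^ 2) := by
        refine sum_congr rfl fun i _ => ?_
        rw [← sub_add_sub_cancel y m (z i), norm_add_sq_real]
        ring
    _ = _ := by rw [sum_add_distrib, sum_add_distrib, ← mul_sum, hcross, ← sum_mul]; ring

end Finset

section GaussKernel

variable (n : ℕ) (σ : ℝ)

lemma gaussKernel_nonneg (x y : EuclideanSpace ℝ (Fin n)) : 0 ≤ gaussKernel n σ x y := by
  unfold gaussKernel
  positivity

lemma gaussKernel_mul_le_sub (x y y' : EuclideanSpace ℝ (Fin n)) :
    gaussKernel n σ x y * ((‖y - x‖ ^ 2 - ‖y' - x‖ ^ 2) / (2 * σ ^ 2))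
      ≤ gaussKernel n σ x y' - gaussKernel n σ x y := by
  have hc : 0 ≤ (2 * Real.pi * σ ^ 2) ^ (-(n : ℝ) / 2) := by positivity
  have h := mul_le_mul_of_nonneg_left (Real.exp_mul_sub_le_exp_sub_exp
    (-‖y' - x‖ ^ 2 / (2 * σ ^ 2)) (-‖y - x‖ ^ 2 / (2 * σ ^ 2))) hc
  unfold gaussKernel
  linear_combination h

theorem sum_gaussKernel_le_sum_gaussKernel_meanShift
    (X : Finset (EuclideanSpace ℝ (Fin n))) (y : EuclideanSpace ℝ (Fin n)) :
    ∑ x ∈ X, gaussKernel n σ x y ≤ ∑ x ∈ X, gaussKernel n σ x (meanShift n σ X y) := by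
  set w := fun x => gaussKernel n σ x y
  set m := meanShift n σ X y
  have hw : ∀ x ∈ X, 0 ≤ w x := fun x _ => gaussKernel_nonneg n σ x y
  have hparallel : ∑ x ∈ X, w x * ‖y - x‖ ^ 2
      = ∑ x ∈ X, w x * ‖m - x‖ ^ 2 + (∑ x ∈ X, w x) * ‖y - m‖ ^ 2 :=
    X.sum_mul_norm_sub_sq_eq_of_nonneg id hw y
  rw [← sub_nonneg, ← sum_sub_distrib]
  calc 0 ≤ (∑ x ∈ X, w x) * ‖y - m‖ ^ 2 / (2 * σ ^ 2) := by
        have := sum_nonneg hw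
        positivity
    _ = ∑ x ∈ X, w x * ((‖y - x‖ ^ 2 - ‖m - x‖ ^ 2) / (2 * σ ^ 2)) := by
        simp_rw [mul_div_assoc', ← sum_div, mul_sub, sum_sub_distrib, hparallel]
        ring
    _ ≤ _ := sum_le_sum fun x _ => gaussKernel_mul_le_sub n σ x y _

end GaussKernel

theorem kde_meanShift_ge_general (n : ℕ) (X : Finset (EuclideanSpace ℝ (Fin n)))
    (σ : ℝ) (y : EuclideanSpace ℝ (Fin n)) :
    kde n σ X y ≤ kde n σ X (meanShift n σ X y) :=
  mul_le_mul_of_nonneg_left (sum_gaussKernel_le_sum_gaussKernel_meanShift n σ X y)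
    (inv_nonneg.2 (Nat.cast_nonneg _))

/-- One mean shift step never decreases the estimated density: `f(m(y)) ≥ f(y)`. -/
theorem kde_meanShift_ge (n : ℕ) (X : Finset (EuclideanSpace ℝ (Fin n)))
    (hX : X.Nonempty) (σ : ℝ) (hσ : 0 < σ) (y : EuclideanSpace ℝ (Fin n)) :
    kde n σ X y ≤ kde n σ X (meanShift n σ X y) :=
  kde_meanShift_ge_general n X σ y
end
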